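/- arXiv:1301.2355 — 7 statements merged into one kernel-verified Lean document; each statement's English description precedes it below -/
import Mathlib

section
/- Let Z and Z' be free-abelian groups and F and F' free groups, with F and F' not infinite cyclic. Then Z × F is isomorphic to Z' × F' if and only if rk(Z) = rk(Z') and rk(F) = rk(F'). -/
/-!
A free group of rank at least two has trivial centre: conjugating a nontrivial reduced word by a
letter other than its first one, with the exponent chosen so that nothing cancels against its last
letter either, makes the word longer. Hence the centre of `Z × F` is exactly `Z`, and an
isomorphism `Z × F ≃* Z' × F'` restricts to an isomorphism of centres `Z ≃* Z'` and induces one of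
central quotients `F ≃* F'`; ranks of free and of free abelian groups are isomorphism invariants.
-/

universe u

open Subgroup

namespace FreeGroup

variable {α : Type*}

theorem isReduced_cons_append_singleton {L : List (α × Bool)} (hL : IsReduced L) (hL₀ : L ≠ [])
    {y : α} {e : Bool} (hhead : ∀ a ∈ L.head?, a.1 ≠ y) (hlast : ∀ a ∈ L.getLast?, a.2 = e) :
    IsReduced ((y, !e) :: (L ++ [(y, e)])) := by
  refine List.IsChain.cons (hL.append (.singleton _) fun a ha b hb _ => ?_) fun a ha h => ?_
  · rw [hlast a ha, ← Option.mem_some_iff.mp hb]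
  · rw [List.head?_append_of_ne_nil _ hL₀] at ha
    exact absurd h.symm (hhead a ha)

theorem center_eq_bot [Nontrivial α] : center (FreeGroup α) = ⊥ := by
  classical
  refine (eq_bot_iff_forall _).mpr fun w hw => ?_
  by_contra hw₁
  obtain ⟨L, hwL⟩ : ∃ L, w.toWord = L := ⟨_, rfl⟩
  have hL₀ : L ≠ [] := hwL ▸ mt toWord_eq_nil_iff.mp hw₁
  obtain ⟨y, hy⟩ := exists_ne (L.head hL₀).1
  set e := (L.getLast hL₀).2
  set c : FreeGroup α := mk [(y, !e)]
  have hhead : ∀ a ∈ L.head?, a.1 ≠ y := fun a ha => by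
    rw [List.head?_eq_some_head hL₀, Option.mem_some_iff] at ha
    rwa [← ha, ne_comm]
  have hlast : ∀ a ∈ L.getLast?, a.2 = e := fun a ha => by
    rw [List.getLast?_eq_some_getLast hL₀, Option.mem_some_iff] at ha
    rw [← ha]
  have hconj : c * w * c⁻¹ = mk ((y, !e) :: (L ++ [(y, e)])) := by
    rw [← mk_toWord (x := w), hwL, inv_mk, mul_mk, mul_mk]
    simp [invRev]
  have hred : IsReduced ((y, !e) :: (L ++ [(y, e)])) :=
    isReduced_cons_append_singleton (hwL ▸ isReduced_toWord) hL₀ hhead hlast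
  have hword : L = (y, !e) :: (L ++ [(y, e)]) := by
    rw [← hred.reduce_eq, ← toWord_mk, ← hconj, mul_inv_eq_iff_eq_mul.mpr (mem_center_iff.mp hw c),
      hwL]
  have hlen := congrArg List.length hword
  simp only [List.length_cons, List.length_append] at hlen
  omega

theorem center_eq_bot_of_isEmpty_mulEquiv_int (h : IsEmpty (FreeGroup α ≃* Multiplicative ℤ)) :
    center (FreeGroup α) = ⊥ := by
  rcases subsingleton_or_nontrivial α with _ | _
  · rcases isEmpty_or_nonempty α with _ | _
    · exact eq_bot_of_subsingleton _
    · have : Unique α := uniqueOfSubsingleton (Classical.arbitrary α)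
      exact h.elim mulEquivIntOfUnique
  · exact center_eq_bot

end FreeGroup

namespace Subgroup

variable {A B G H : Type*} [CommGroup A] [CommGroup B] [Group G] [Group H]

theorem map_equiv_center (e : G ≃* H) : (center G).map e = center H := by
  ext x
  rw [map_equiv_eq_comap_symm, mem_comap, mem_center_iff, mem_center_iff, e.symm.surjective.forall]
  simp only [MonoidHom.coe_coe, ← map_mul, e.symm.injective.eq_iff]

theorem center_prod_eq_ker_snd (hG : center G = ⊥) : center (A × G) = (MonoidHom.snd A G).ker := by
  rw [Subgroup.center_prod, CommGroup.center_eq_top, hG, MonoidHom.ker_snd]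

theorem mem_center_prod_iff_of_center_eq_bot (hG : center G = ⊥) {x : A × G} :
    x ∈ center (A × G) ↔ x.2 = 1 := by
  rw [center_prod_eq_ker_snd hG, MonoidHom.mem_ker, MonoidHom.coe_snd]

noncomputable def centerProdEquiv (hG : center G = ⊥) : center (A × G) ≃* A :=
  have hsnd (x : center (A × G)) := (mem_center_prod_iff_of_center_eq_bot hG).mp x.2
  MulEquiv.ofBijective ((MonoidHom.fst A G).comp (center (A × G)).subtype)
    ⟨fun x y hxy => Subtype.ext <| Prod.ext hxy <| (hsnd x).trans (hsnd y).symm,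
      fun a => ⟨⟨(a, 1), (mem_center_prod_iff_of_center_eq_bot hG).mpr rfl⟩, rfl⟩⟩

noncomputable def quotientCenterProdEquiv (hG : center G = ⊥) : (A × G) ⧸ center (A × G) ≃* G :=
  (QuotientGroup.quotientMulEquivOfEq (center_prod_eq_ker_snd hG)).trans
    (QuotientGroup.quotientKerEquivOfSurjective _ Prod.snd_surjective)

theorem nonempty_mulEquiv_of_prod_mulEquiv (E : A × G ≃* B × H) (hG : center G = ⊥)
    (hH : center H = ⊥) : Nonempty (A ≃* B) ∧ Nonempty (G ≃* H) :=
  ⟨⟨(centerProdEquiv hG).symm.trans ((centerCongr E).trans (centerProdEquiv hH))⟩,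
    ⟨(quotientCenterProdEquiv hG).symm.trans
      ((QuotientGroup.congr _ _ E (map_equiv_center E)).trans (quotientCenterProdEquiv hH))⟩⟩

end Subgroup

/-- For free-abelian groups `Z = FreeAbelianGroup ι`, `Z' = FreeAbelianGroup ι'`
and free groups `F = FreeGroup σ`, `F' = FreeGroup σ'` which are not infinite cyclic,
`Z × F ≅ Z' × F'` iff the ranks agree. -/
theorem stmt0 (ι ι' σ σ' : Type u)
    (hF : IsEmpty (FreeGroup σ ≃* Multiplicative ℤ))
    (hF' : IsEmpty (FreeGroup σ' ≃* Multiplicative ℤ)) :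
    Nonempty ((Multiplicative (FreeAbelianGroup ι) × FreeGroup σ) ≃*
        (Multiplicative (FreeAbelianGroup ι') × FreeGroup σ')) ↔
      Cardinal.mk ι = Cardinal.mk ι' ∧ Cardinal.mk σ = Cardinal.mk σ' := by
  constructor
  · rintro ⟨E⟩
    obtain ⟨⟨eZ⟩, ⟨eF⟩⟩ := Subgroup.nonempty_mulEquiv_of_prod_mulEquiv E
      (FreeGroup.center_eq_bot_of_isEmpty_mulEquiv_int hF)
      (FreeGroup.center_eq_bot_of_isEmpty_mulEquiv_int hF')
    exact ⟨Cardinal.mk_congr (.ofFreeAbelianGroupEquiv eZ.toAdditive),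
      Cardinal.mk_congr (.ofFreeGroupEquiv eF)⟩
  · rintro ⟨hι, hσ⟩
    obtain ⟨eι⟩ := Cardinal.eq.mp hι
    obtain ⟨eσ⟩ := Cardinal.eq.mp hσ
    exact ⟨(FreeAbelianGroup.equivOfEquiv eι).toMultiplicative.prodCongr
      (FreeGroup.freeGroupCongr eσ)⟩
end

section
/- Every subgroup of a direct product Z × F, where Z is free-abelian and F is free, is itself isomorphic to a direct product of a free-abelian group and a free group. -/
/-!
Let `q : H → F` be the second projection. Its image `B` is free (Nielsen–Schreier), so `q`
splits, and its kernel is central in `H` (the first factor is abelian) and embeds into `Z` through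
the first projection. Hence `H ≃ ker q × B`, and `ker q` is a subgroup of a free abelian group.
The latter is free: well-order a basis and, for each coordinate `i`, pick an element of the
subgroup supported on coordinates `≤ i` whose `i`-th coefficient generates the ideal of all such
coefficients; those with nonzero leading coefficient form a triangular basis.
-/

universe u

open Finsupp Set

namespace Finsupp

variable {R ι : Type*} [LinearOrder ι]

theorem eq_zero_or_exists_support_subset_Iic [Zero R] (x : ι →₀ R) :
    x = 0 ∨ ∃ j ∈ x.support, ↑x.support ⊆ Iic j := by
  rcases x.support.eq_empty_or_nonempty with h | h
  · exact .inl (support_eq_empty.mp h)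
  · exact .inr ⟨_, x.support.max'_mem h, fun j hj => x.support.le_max' j hj⟩

theorem linearIndependent_of_mem_supported_Iic [Ring R] [NoZeroDivisors R]
    (v : ι → ι →₀ R) (hv : ∀ i, v i ∈ supported R R (Iic i)) :
    LinearIndependent R (fun i : {i // v i i ≠ 0} => v i) := by
  rw [linearIndependent_iff]
  intro l hl
  by_contra hl0
  have hne : l.support.Nonempty := support_nonempty_iff.mpr hl0
  set m := l.support.max' hne
  have hv_lt : ∀ i j, i < j → v i j = 0 := fun i j hij =>
    notMem_support_iff.mp fun hj => not_le.mpr hij ((mem_supported R _).mp (hv i) hj)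
  have hlm : linearCombination R (fun i : {i // v i i ≠ 0} => v i) l m.1 = l m * v m m := by
    rw [linearCombination_apply, Finsupp.sum, finsetSum_apply, Finset.sum_eq_single m]
    · simp
    · intro s hs hsm
      simp [hv_lt s m (lt_of_le_of_ne (Finset.le_max' _ s hs) (Subtype.coe_ne_coe.mpr hsm))]
    · exact fun h => absurd (l.support.max'_mem hne) h
  rw [hl, zero_apply, eq_comm, mul_eq_zero] at hlm
  exact hlm.elim (mem_support_iff.mp (l.support.max'_mem hne)) m.2

theorem le_span_of_forall_dvd_apply [CommRing R] [WellFoundedLT ι] (N : Submodule R (ι →₀ R))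
    (e : ι → ι →₀ R) (heN : ∀ i, e i ∈ N) (he : ∀ i, e i ∈ supported R R (Iic i))
    (hdvd : ∀ i, ∀ x ∈ N, x ∈ supported R R (Iic i) → e i i ∣ x i) :
    N ≤ Submodule.span R (range fun i : {i // e i i ≠ 0} => e i) := by
  set S := Submodule.span R (range fun i : {i // e i i ≠ 0} => e i)
  suffices h : ∀ i, ∀ x ∈ N, x ∈ supported R R (Iic i) → x ∈ S by
    intro x hx
    obtain rfl | ⟨j, -, hj⟩ := x.eq_zero_or_exists_support_subset_Iic
    · exact S.zero_mem
    · exact h j x hx ((mem_supported R x).mpr hj)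
  intro i
  induction i using WellFoundedLT.induction with | _ i ih =>
  intro x hxN hxi
  obtain ⟨c, hc⟩ := hdvd i x hxN hxi
  -- subtract a multiple of `e i` to clear the `i`-th coordinate
  obtain ⟨z, hzS, hzN, hzi⟩ : ∃ z ∈ S, z ∈ N ∧ z ∈ supported R R (Iic i) ∧ z i = x i := by
    by_cases h0 : e i i = 0
    · exact ⟨0, S.zero_mem, N.zero_mem, zero_mem _, by simp [hc, h0]⟩
    · refine ⟨c • e i, S.smul_mem c (Submodule.subset_span ⟨⟨i, h0⟩, rfl⟩), N.smul_mem c (heN i),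
        Submodule.smul_mem _ c (he i), ?_⟩
      simp [hc, mul_comm]
  have hyN : x - z ∈ N := N.sub_mem hxN hzN
  have hy : ↑(x - z).support ⊆ Iio i := fun j hj => by
    have hji : j ≤ i := (mem_supported R _).mp (Submodule.sub_mem _ hxi hzi.1) hj
    refine lt_of_le_of_ne hji ?_
    rintro rfl
    exact mem_support_iff.mp hj (by simp [hzi.2])
  rw [← sub_add_cancel x z]
  refine S.add_mem ?_ hzS
  obtain h | ⟨j, hj, hjs⟩ := (x - z).eq_zero_or_exists_support_subset_Iic
  · rw [h]; exact S.zero_mem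
  · exact ih j (hy hj) _ hyN ((mem_supported R _).mpr hjs)

end Finsupp

namespace Submodule

variable {R : Type*} [CommRing R] [IsPrincipalIdealRing R]

theorem exists_forall_dvd_apply_of_mem_supported_Iic {ι : Type*} [LinearOrder ι]
    (N : Submodule R (ι →₀ R)) :
    ∃ e : ι → ι →₀ R, (∀ i, e i ∈ N) ∧ (∀ i, e i ∈ supported R R (Iic i)) ∧
      ∀ i, ∀ x ∈ N, x ∈ supported R R (Iic i) → e i i ∣ x i := by
  have h : ∀ i, ∃ y ∈ N ⊓ supported R R (Iic i),
      ∀ x ∈ N ⊓ supported R R (Iic i), y i ∣ x i := fun i => by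
    set I : Ideal R := (N ⊓ supported R R (Iic i)).map (lapply i)
    obtain ⟨y, hy, hyi⟩ := IsPrincipal.generator_mem I
    refine ⟨y, hy, fun x hx => ?_⟩
    rw [show y i = IsPrincipal.generator I from hyi]
    exact (IsPrincipal.mem_iff_generator_dvd I).mp ⟨x, hx, rfl⟩
  choose e he hdvd using h
  exact ⟨e, fun i => (he i).1, fun i => (he i).2, fun i x hxN hx => hdvd i x ⟨hxN, hx⟩⟩

theorem free_of_finsupp [IsDomain R] {ι : Type*} (N : Submodule R (ι →₀ R)) : Module.Free R N := by
  let _ := IsWellOrder.linearOrder (WellOrderingRel (α := ι))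
  have : WellFoundedLT ι := ⟨IsWellFounded.wf (r := WellOrderingRel)⟩
  obtain ⟨e, heN, he, hdvd⟩ := N.exists_forall_dvd_apply_of_mem_supported_Iic
  have hspan : N = span R (range fun i : {i // e i i ≠ 0} => e i) :=
    le_antisymm (le_span_of_forall_dvd_apply N e heN he hdvd)
      (span_le.mpr (range_subset_iff.mpr fun i => heN i))
  exact .of_equiv ((LinearEquiv.ofEq _ _ hspan).trans
    (Module.Basis.span (linearIndependent_of_mem_supported_Iic e he)).repr).symm

theorem free_of_isPrincipalIdealRing [IsDomain R] {M : Type*} [AddCommGroup M] [Module R M]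
    [Module.Free R M] (N : Submodule R M) : Module.Free R N :=
  have := (N.map (Module.Free.chooseBasis R M).repr.toLinearMap).free_of_finsupp
  .of_equiv (N.equivMapOfInjective _ (Module.Free.chooseBasis R M).repr.injective).symm

end Submodule

theorem AddSubgroup.exists_addEquiv_freeAbelianGroup {ι : Type u}
    (A : AddSubgroup (FreeAbelianGroup ι)) :
    ∃ α : Type u, Nonempty (A ≃+ FreeAbelianGroup α) := by
  have := A.toIntSubmodule.free_of_isPrincipalIdealRing
  exact ⟨_, ⟨(Module.Free.chooseBasis ℤ A.toIntSubmodule).repr.toAddEquiv.trans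
    (FreeAbelianGroup.equivFinsupp _).symm⟩⟩

theorem MonoidHom.exists_mulEquiv_freeAbelianGroup_of_injective {K : Type*} {ι : Type u}
    [Group K] (f : K →* Multiplicative (FreeAbelianGroup ι)) (hf : Function.Injective f) :
    ∃ α : Type u, Nonempty (K ≃* Multiplicative (FreeAbelianGroup α)) := by
  obtain ⟨α, ⟨e⟩⟩ := (toAdditiveLeft f).range.exists_addEquiv_freeAbelianGroup
  exact ⟨α, ⟨AddEquiv.toMultiplicativeRight ((AddMonoidHom.ofInjective hf).trans e)⟩⟩

theorem IsFreeGroup.exists_comp_eq_id_of_surjective {G : Type*} {Q : Type u} [Group G] [Group Q]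
    [IsFreeGroup Q] (f : G →* Q) (hf : Function.Surjective f) :
    ∃ s : Q →* G, f.comp s = MonoidHom.id Q := by
  choose g hg using hf
  exact ⟨lift (g ∘ of), ext_hom fun a => by simp [hg]⟩

namespace MonoidHom

variable {G B : Type*} [Group G] [Group B]

theorem ker_le_center_of_injective_prod {A : Type*} [CommGroup A] (f : G →* A) (g : G →* B)
    (hfg : Function.Injective (f.prod g)) : g.ker ≤ Subgroup.center G := fun k hk =>
  Subgroup.mem_center_iff.mpr fun x =>
    hfg (Prod.ext (by simp [mul_comm]) (by simp [(mem_ker).mp hk]))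

theorem injective_comp_ker_subtype_of_injective_prod {A : Type*} [Group A] (f : G →* A) (g : G →* B)
    (hfg : Function.Injective (f.prod g)) : Function.Injective (f.comp g.ker.subtype) :=
  fun x y hxy => Subtype.ext (hfg (Prod.ext hxy (by simp [(mem_ker).mp x.2, (mem_ker).mp y.2])))

noncomputable def kerProdMulEquivOfRightInverse {A : Type*} [Group A] (f : G →* A) (s : A →* G)
    (hs : f.comp s = .id A) (hcen : f.ker ≤ Subgroup.center G) : f.ker × A ≃* G :=
  have hfs (a : A) : f (s a) = a := DFunLike.congr_fun hs a
  MulEquiv.ofBijective (f.ker.subtype.noncommCoprod s fun k a =>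
    Commute.symm (Subgroup.mem_center_iff.mp (hcen k.2) (s a))) <| by
    refine ⟨(injective_iff_map_eq_one _).mpr fun ⟨k, a⟩ h => ?_,
      fun g => ⟨(⟨g * (s (f g))⁻¹, by simp [hfs]⟩, f g), by simp [noncommCoprod_apply]⟩⟩
    simp only [noncommCoprod_apply, Subgroup.coe_subtype] at h
    have ha : a = 1 := by simpa [(mem_ker).mp k.2, hfs] using congrArg f h
    subst ha
    simp_all

end MonoidHom

/-- Every subgroup of a direct product of a free-abelian group and a free
group is itself isomorphic to such a direct product. -/
theorem stmt2 (ι σ : Type u)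
    (H : Subgroup (Multiplicative (FreeAbelianGroup ι) × FreeGroup σ)) :
    ∃ (α β : Type u),
      Nonempty (H ≃* (Multiplicative (FreeAbelianGroup α) × FreeGroup β)) := by
  let p := (MonoidHom.fst _ _).comp H.subtype
  let q := (MonoidHom.snd _ _).comp H.subtype
  have hpq : Function.Injective (p.prod q) := fun x y h =>
    Subtype.ext (Prod.ext (congrArg Prod.fst h) (congrArg Prod.snd h))
  obtain ⟨s, hs⟩ :=
    IsFreeGroup.exists_comp_eq_id_of_surjective q.rangeRestrict q.rangeRestrict_surjective
  have hcen : q.rangeRestrict.ker ≤ Subgroup.center H :=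
    q.ker_rangeRestrict ▸ p.ker_le_center_of_injective_prod q hpq
  obtain ⟨α, ⟨eK⟩⟩ := (p.comp q.ker.subtype).exists_mulEquiv_freeAbelianGroup_of_injective
    (p.injective_comp_ker_subtype_of_injective_prod q hpq)
  exact ⟨α, IsFreeGroup.Generators q.range,
    ⟨(q.rangeRestrict.kerProdMulEquivOfRightInverse s hs hcen).symm.trans <|
      ((MulEquiv.subgroupCongr q.ker_rangeRestrict).trans eK).prodCongr
        (IsFreeGroup.toFreeGroup q.range)⟩⟩
end

section
/- In ℤ² × F₂ = ⟨s,t | [s,t]⟩ × ⟨a,b⟩, the subgroup H' = ⟨s, t², a, tb⟩ satisfies [ℤ² × F₂ : H'] = 2, while [ℤ² : H' ∩ ℤ²] · [F₂ : H' ∩ F₂] = 4; hence the inequality [Z × F : H] ≤ [Z : H ∩ Z]·[F : H ∩ F] can be strict. -/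
/-! `H'` is the kernel of the parity of the total exponent of `t` and `b`, a surjection onto
`ℤ/2` that stays surjective on each factor, so all three indices are `2`. The inclusion of the
kernel in `H'` is the only real work: `a ↦ a, b ↦ tb` lifts `F₂` into `H'` (as `t` is central),
and the kernel meets `ℤ²` exactly in `⟨s, t²⟩ ≤ H'`. -/

namespace Stmt7

abbrev G := Multiplicative (Fin 2 → ℤ) × FreeGroup (Fin 2)

/-- `s = (1,0) ∈ ℤ²` -/
def s : G := (Multiplicative.ofAdd (Pi.single 0 1), 1)
/-- `t = (0,1) ∈ ℤ²` -/
def t : G := (Multiplicative.ofAdd (Pi.single 1 1), 1)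
/-- generator `a` of `F₂` -/
def a : G := (1, FreeGroup.of 0)
/-- generator `b` of `F₂` -/
def b : G := (1, FreeGroup.of 1)

end Stmt7

theorem MonoidHom.index_ker_eq_of_card_eq_prime {G Q : Type*} [Group G] [Group Q] {p : ℕ}
    [Fact p.Prime] (hQ : Nat.card Q = p) (f : G →* Q) {x : G} (hx : f x ≠ 1) :
    f.ker.index = p := by
  have : Fact (Nat.card Q).Prime := hQ ▸ inferInstance
  have hrange : f.range = ⊤ :=
    f.range.eq_bot_or_eq_top_of_prime_card.resolve_left fun h ↦
      hx (Subgroup.mem_bot.mp (h ▸ ⟨x, rfl⟩))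
  rw [Subgroup.index_ker, hrange, Subgroup.card_top, hQ]

theorem Subgroup.eq_of_le_of_comap_inl_le {A B : Type*} [Group A] [Group B]
    {H K : Subgroup (A × B)} (hHK : H ≤ K) (σ : B → A × B) (hσ : ∀ w, (σ w).2 = w)
    (hσH : ∀ w, σ w ∈ H) (hinl : K.comap (MonoidHom.inl A B) ≤ H.comap (MonoidHom.inl A B)) :
    H = K := by
  refine le_antisymm hHK fun x hxK ↦ ?_
  have hx : x = MonoidHom.inl A B (x.1 * (σ x.2).1⁻¹) * σ x.2 := by
    ext <;> simp [hσ]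
  have hinlK : MonoidHom.inl A B (x.1 * (σ x.2).1⁻¹) ∈ K := by
    have : MonoidHom.inl A B (x.1 * (σ x.2).1⁻¹) = x * (σ x.2)⁻¹ := by
      rw [eq_mul_inv_iff_mul_eq, ← hx]
    exact this ▸ mul_mem hxK (inv_mem (hHK (hσH x.2)))
  exact hx ▸ mul_mem (hinl hinlK) (hσH x.2)

namespace Stmt7

def tParity : Multiplicative (Fin 2 → ℤ) →* Multiplicative (ZMod 2) :=
  AddMonoidHom.toMultiplicative ((Int.castAddHom (ZMod 2)).comp (Pi.evalAddMonoidHom _ 1))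

def bParity : FreeGroup (Fin 2) →* Multiplicative (ZMod 2) :=
  FreeGroup.lift ![1, Multiplicative.ofAdd 1]

def parity : G →* Multiplicative (ZMod 2) := tParity.coprod bParity

def freeSection : FreeGroup (Fin 2) →* G := FreeGroup.lift ![a, t * b]

theorem closure_le_ker_parity : Subgroup.closure {s, t ^ 2, a, t * b} ≤ parity.ker := by
  rw [Subgroup.closure_le]
  rintro x (rfl | rfl | rfl | rfl) <;> simp [parity, tParity, bParity, s, t, a, b] <;> decide

theorem freeSection_snd (w : FreeGroup (Fin 2)) : (freeSection w).2 = w := by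
  have : (MonoidHom.snd _ _).comp freeSection = MonoidHom.id _ := by
    ext i; fin_cases i <;> simp [freeSection, a, t, b]
  exact DFunLike.congr_fun this w

theorem freeSection_mem (w : FreeGroup (Fin 2)) :
    freeSection w ∈ Subgroup.closure {s, t ^ 2, a, t * b} := by
  refine FreeGroup.range_lift_le ?_ ⟨w, rfl⟩
  rintro _ ⟨i, rfl⟩
  fin_cases i <;> exact Subgroup.subset_closure (by simp)

theorem inl_mem_closure_of_tParity_eq_one {m : Multiplicative (Fin 2 → ℤ)} (hm : tParity m = 1) :
    MonoidHom.inl _ _ m ∈ Subgroup.closure {s, t ^ 2, a, t * b} := by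
  obtain ⟨k, hk⟩ : (2 : ℤ) ∣ m.toAdd 1 :=
    (ZMod.intCast_zmod_eq_zero_iff_dvd _ 2).mp (congrArg Multiplicative.toAdd hm)
  have hdecomp : MonoidHom.inl _ _ m = s ^ m.toAdd 0 * (t ^ 2) ^ k := by
    ext i
    · fin_cases i <;> simp [s, t, hk, mul_comm]
    · simp [s, t]
  rw [hdecomp]
  exact mul_mem (zpow_mem (Subgroup.subset_closure (by simp)) _)
    (zpow_mem (Subgroup.subset_closure (by simp)) _)

theorem closure_eq_ker_parity : Subgroup.closure {s, t ^ 2, a, t * b} = parity.ker :=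
  Subgroup.eq_of_le_of_comap_inl_le closure_le_ker_parity freeSection freeSection_snd
    freeSection_mem fun m hm ↦ inl_mem_closure_of_tParity_eq_one (by simpa [parity] using hm)

/-- In `ℤ² × F₂`, the subgroup `H' = ⟨s, t², a, tb⟩` has index `2`, while
`[ℤ² : H' ∩ ℤ²] · [F₂ : H' ∩ F₂] = 4`; hence the inequality of Statement 6 can be strict. -/
theorem stmt7 :
    (Subgroup.closure {s, t ^ 2, a, t * b} : Subgroup G).index = 2 ∧
      ((Subgroup.closure {s, t ^ 2, a, t * b} : Subgroup G).comap
            (MonoidHom.inl (Multiplicative (Fin 2 → ℤ)) (FreeGroup (Fin 2)))).index *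
          ((Subgroup.closure {s, t ^ 2, a, t * b} : Subgroup G).comap
            (MonoidHom.inr (Multiplicative (Fin 2 → ℤ)) (FreeGroup (Fin 2)))).index = 4 := by
  have hcard : Nat.card (Multiplicative (ZMod 2)) = 2 := by simp
  rw [closure_eq_ker_parity, MonoidHom.comap_ker, MonoidHom.comap_ker]
  refine ⟨parity.index_ker_eq_of_card_eq_prime hcard (x := t) ?_, ?_⟩
  · simp [parity, tParity, t]
  rw [(parity.comp _).index_ker_eq_of_card_eq_prime hcard
      (x := Multiplicative.ofAdd (Pi.single 1 1)),
    (parity.comp _).index_ker_eq_of_card_eq_prime hcard (x := FreeGroup.of 1)]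
  · simp [parity, bParity]
  · simp [parity, tParity]

end Stmt7
end

section
/- For m ≥ 1 and n ≥ 2, the group ℤ^m × F_n does not satisfy the Howson property. -/
/-!
Take `H = ⟨(1, a), (1, b)⟩` and `H' = ⟨(x, a), (1, b)⟩` in `A × F(ι)`, where some homomorphism
`χ : A → ℤ` sends `x` to `1`. Both contain `(1, aⁱ b a⁻ⁱ)` for every `i`. Map `F(ι)` to
`ℤ ≀ ℤ` by sending `a` to the translation and `b` to `δ₀`; then `aⁱ b a⁻ⁱ ↦ δᵢ`. On `H'` the
`ℤ`-coordinate of the image of the `F(ι)`-part equals `χ` of the `A`-part, which is trivial on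
`H`, so `H ∩ H'` maps into the base `ℤ →₀ ℤ`, onto a subgroup containing every `δᵢ`. Such a
subgroup is not finitely generated, as finitely many finitely supported functions have their
supports in one finite set.
-/

open Finsupp SemidirectProduct Multiplicative

theorem Subgroup.FG.map {G K : Type*} [Group G] [Group K] {H : Subgroup G} (hH : H.FG)
    (f : G →* K) : (H.map f).FG := by
  classical
  obtain ⟨S, rfl⟩ := hH
  exact ⟨S.image f, by rw [Finset.coe_image, MonoidHom.map_closure]⟩

theorem Subgroup.FG.comap_of_le_range {G K : Type*} [Group G] [Group K] {f : G →* K}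
    (hf : Function.Injective f) {L : Subgroup K} (hL : L.FG) (hle : L ≤ f.range) :
    (L.comap f).FG := by
  rw [Subgroup.fg_iff_submonoid_fg]
  refine Submonoid.FG.map_injective f hf ?_
  rwa [← Subgroup.map_toSubmonoid, Subgroup.map_comap_eq_self hle,
    ← Subgroup.fg_iff_submonoid_fg]

section Finsupp

variable {ι M : Type*} [AddCommGroup M]

theorem AddSubgroup.FG.exists_support_subset {K : AddSubgroup (ι →₀ M)} (hK : K.FG) :
    ∃ s : Finset ι, ∀ f ∈ K, f.support ⊆ s := by
  classical
  obtain ⟨S, rfl⟩ := hK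
  refine ⟨S.biUnion support, fun f hf => ?_⟩
  have hle : AddSubgroup.closure (S : Set (ι →₀ M)) ≤
      (supported M ℤ (S.biUnion support : Set ι)).toAddSubgroup :=
    AddSubgroup.closure_le _ |>.2 fun g hg => (mem_supported ℤ _).2 <|
      Finset.coe_subset.2 (Finset.subset_biUnion_of_mem _ hg)
  exact_mod_cast (mem_supported ℤ _).1 (hle hf)

theorem AddSubgroup.not_fg_of_forall_single_mem [Infinite ι] {K : AddSubgroup (ι →₀ M)}
    {m : M} (hm : m ≠ 0) (hK : ∀ i, single i m ∈ K) : ¬K.FG := by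
  intro hFG
  obtain ⟨s, hs⟩ := hFG.exists_support_subset
  obtain ⟨i, hi⟩ := Infinite.exists_notMem_finset s
  exact hi (hs _ (hK i) (by simp [support_single, hm]))

end Finsupp

attribute [local instance] Finsupp.comapDistribMulAction in
noncomputable def shiftAut : Multiplicative ℤ →* MulAut (Multiplicative (ℤ →₀ ℤ)) :=
  (MulAutMultiplicative (ℤ →₀ ℤ)).symm.toMonoidHom.comp
    (DistribMulAction.toAddAut (Multiplicative ℤ) (ℤ →₀ ℤ))

theorem shiftAut_single (k i v : ℤ) :
    shiftAut (ofAdd k) (ofAdd (single i v)) = ofAdd (single (k + i) v) :=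
  congrArg ofAdd mapDomain_single

abbrev IntWrInt := Multiplicative (ℤ →₀ ℤ) ⋊[shiftAut] Multiplicative ℤ

namespace IntWrInt

theorem inr_zpow_conj_inl_single (i : ℤ) :
    (inr (ofAdd 1) ^ i * inl (ofAdd (single 0 1)) * (inr (ofAdd 1) ^ i)⁻¹ : IntWrInt) =
      inl (ofAdd (single i 1)) := by
  rw [← map_zpow, ← map_inv, ← inl_aut, ← ofAdd_zsmul, smul_eq_mul, mul_one, shiftAut_single,
    add_zero]

theorem not_fg_of_le_range_inl {L : Subgroup IntWrInt} (hle : L ≤ inl.range)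
    (hL : ∀ i, inl (ofAdd (single i 1)) ∈ L) : ¬L.FG := fun hFG =>
  AddSubgroup.not_fg_of_forall_single_mem (K := AddSubgroup.toSubgroup.symm (L.comap inl))
    one_ne_zero hL <|
      (AddSubgroup.fg_iff_mul_fg _).2 (by simpa using hFG.comap_of_le_range inl_injective hle)

end IntWrInt

section Howson

variable {A ι : Type*} [Group A]

def twistedFreeSubgroup (y : A) (a b : ι) : Subgroup (A × FreeGroup ι) :=
  Subgroup.closure {(y, .of a), (1, .of b)}

theorem twistedFreeSubgroup_fg (y : A) (a b : ι) : (twistedFreeSubgroup y a b).FG :=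
  (Group.fg_iff_subgroup_fg _).1 (Group.closure_finite_fg _)

theorem conj_mem_twistedFreeSubgroup (y : A) (a b : ι) (i : ℤ) :
    ((1 : A), FreeGroup.of a ^ i * .of b * (.of a ^ i)⁻¹) ∈ twistedFreeSubgroup y a b := by
  have hconj : ((1 : A), FreeGroup.of a ^ i * .of b * (.of a ^ i)⁻¹) =
      (y, .of a) ^ i * (1, .of b) * ((y, .of a) ^ i)⁻¹ := by
    ext <;> simp
  rw [hconj]
  have ha : (y, FreeGroup.of a) ∈ twistedFreeSubgroup y a b := Subgroup.subset_closure (by simp)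
  have hb : ((1 : A), FreeGroup.of b) ∈ twistedFreeSubgroup y a b :=
    Subgroup.subset_closure (by simp)
  exact mul_mem (mul_mem (zpow_mem ha i) hb) (inv_mem (zpow_mem ha i))

theorem fst_eq_one_of_mem_twistedFreeSubgroup {a b : ι} {g : A × FreeGroup ι}
    (hg : g ∈ twistedFreeSubgroup 1 a b) : g.1 = 1 := by
  suffices twistedFreeSubgroup 1 a b ≤ (MonoidHom.fst A (FreeGroup ι)).ker from this hg
  rw [twistedFreeSubgroup, Subgroup.closure_le]
  rintro _ (rfl | rfl) <;> rfl

variable [DecidableEq ι] {a b : ι}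

noncomputable def freeGroupToIntWrInt (a b : ι) : FreeGroup ι →* IntWrInt :=
  FreeGroup.lift fun i => if i = a then inr (ofAdd 1) else if i = b then inl (ofAdd (single 0 1))
    else 1

theorem freeGroupToIntWrInt_of_left : freeGroupToIntWrInt a b (.of a) = inr (ofAdd 1) := by
  simp [freeGroupToIntWrInt]

theorem freeGroupToIntWrInt_of_right (hab : a ≠ b) :
    freeGroupToIntWrInt a b (.of b) = inl (ofAdd (single 0 1)) := by
  simp [freeGroupToIntWrInt, hab.symm]

theorem freeGroupToIntWrInt_conj (hab : a ≠ b) (i : ℤ) :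
    freeGroupToIntWrInt a b (.of a ^ i * .of b * (.of a ^ i)⁻¹) = inl (ofAdd (single i 1)) := by
  rw [map_mul, map_mul, map_inv, map_zpow, freeGroupToIntWrInt_of_left,
    freeGroupToIntWrInt_of_right hab, IntWrInt.inr_zpow_conj_inl_single]

theorem rightHom_freeGroupToIntWrInt_of_mem_twistedFreeSubgroup (hab : a ≠ b) {x : A}
    {χ : A →* Multiplicative ℤ} (hx : χ x = ofAdd 1) {g : A × FreeGroup ι}
    (hg : g ∈ twistedFreeSubgroup x a b) :
    rightHom (freeGroupToIntWrInt a b g.2) = χ g.1 := by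
  suffices twistedFreeSubgroup x a b ≤
      ((rightHom.comp (freeGroupToIntWrInt a b)).comp (MonoidHom.snd _ _)).eqLocus
        (χ.comp (MonoidHom.fst _ _)) from this hg
  rw [twistedFreeSubgroup, Subgroup.closure_le]
  rintro _ (rfl | rfl)
  · change rightHom (freeGroupToIntWrInt a b (.of a)) = χ x
    rw [freeGroupToIntWrInt_of_left, rightHom_inr, hx]
  · change rightHom (freeGroupToIntWrInt a b (.of b)) = χ 1
    rw [freeGroupToIntWrInt_of_right hab, rightHom_inl, map_one]

theorem not_fg_inf_twistedFreeSubgroup (hab : a ≠ b) {x : A} {χ : A →* Multiplicative ℤ}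
    (hx : χ x = ofAdd 1) : ¬(twistedFreeSubgroup 1 a b ⊓ twistedFreeSubgroup x a b).FG := by
  intro hFG
  refine IntWrInt.not_fg_of_le_range_inl ?_ (fun i => ?_)
    (hFG.map ((freeGroupToIntWrInt a b).comp (MonoidHom.snd _ _)))
  · rintro _ ⟨g, ⟨hg, hg'⟩, rfl⟩
    rw [range_inl_eq_ker_rightHom, MonoidHom.mem_ker]
    simpa [fst_eq_one_of_mem_twistedFreeSubgroup hg] using
      rightHom_freeGroupToIntWrInt_of_mem_twistedFreeSubgroup hab hx hg'
  · exact ⟨(1, _),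
      ⟨conj_mem_twistedFreeSubgroup 1 a b i, conj_mem_twistedFreeSubgroup x a b i⟩,
      freeGroupToIntWrInt_conj hab i⟩

end Howson

/-- For `m ≥ 1` and `n ≥ 2`, the group `ℤ^m × F_n` does not satisfy the
Howson property: there are finitely generated subgroups with non-finitely generated
intersection. -/
theorem stmt9 (m n : ℕ) (hm : 1 ≤ m) (hn : 2 ≤ n) :
    ∃ H H' : Subgroup (Multiplicative (Fin m → ℤ) × FreeGroup (Fin n)),
      H.FG ∧ H'.FG ∧ ¬ (H ⊓ H').FG := by
  let a : Fin n := ⟨0, by omega⟩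
  let b : Fin n := ⟨1, hn⟩
  let χ : Multiplicative (Fin m → ℤ) →* Multiplicative ℤ :=
    (Pi.evalAddMonoidHom (fun _ => ℤ) ⟨0, hm⟩).toMultiplicative
  exact ⟨_, _, twistedFreeSubgroup_fg 1 a b, twistedFreeSubgroup_fg (ofAdd 1) a b,
    not_fg_inf_twistedFreeSubgroup (by simp [a, b, Fin.ext_iff]) (χ := χ) rfl⟩
end

section
/- Every endomorphism Ψ of G = ℤ^m × F_n with n ≠ 1 is of exactly one of the following two types: (I) Ψ(t^a u) = t^{aQ + uP} · φ(u) for some φ ∈ End(F_n), Q ∈ M_m(ℤ), P ∈ M_{n×m}(ℤ); or (II) Ψ(t^a u) = t^{aQ + uP} · z^{a·lᵀ + u·hᵀ} for some z ∈ F_n which is nontrivial and not a proper power, Q ∈ M_m(ℤ), P ∈ M_{n×m}(ℤ), 0 ≠ l ∈ ℤ^m, h ∈ ℤ^n. -/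
/-!
The `ℤ^m`-component of `Ψ` is a homomorphism to an abelian group, so it is given by integer
matrices `Q`, `P` acting on `a` and on the abelianization `ū`. Everything depends on the
`F_n`-component `s` of `Ψ` restricted to the central factor `ℤ^m`. If it is trivial, then
`s(t^a u) = s(u)` and `Ψ` has type (I). Otherwise `w = s(t^{a₀}) ≠ 1` for some `a₀`, and since
`t^{a₀}` is central, `s` takes values in the centralizer of `w`. By Nielsen–Schreier this
centralizer is a free group with nontrivial centre, hence infinite cyclic, generated by some `z`
that is not a proper power. Thus `s = z^κ` for a homomorphism `κ : ℤ^m × F_n → ℤ`, i.e. for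
vectors `l`, `h`, with `l ≠ 0` because `s(t^{a₀}) ≠ 1`. Since free groups are torsion-free, type
(II) never kills `ℤ^m`, while type (I) does, so the types are exclusive.
-/

open Matrix

namespace Stmt11

/-- Abelianization `F_n → ℤ^n` (exponent-sum vector). -/
def abv {n : ℕ} (u : FreeGroup (Fin n)) : Fin n → ℤ :=
  Multiplicative.toAdd ((FreeGroup.lift fun i => Multiplicative.ofAdd (Pi.single i 1)) u)

abbrev GG (m n : ℕ) := Multiplicative (Fin m → ℤ) × FreeGroup (Fin n)

/-- Type (I): `t^a u ↦ t^{aQ+ūP} φ(u)`. -/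
def IsTypeI (m n : ℕ) (Ψ : GG m n →* GG m n) : Prop :=
  ∃ (φ : FreeGroup (Fin n) →* FreeGroup (Fin n)) (Q : Matrix (Fin m) (Fin m) ℤ)
    (P : Matrix (Fin n) (Fin m) ℤ),
    ∀ (a : Fin m → ℤ) (u : FreeGroup (Fin n)),
      Ψ (Multiplicative.ofAdd a, u) =
        (Multiplicative.ofAdd (a ᵥ* Q + abv u ᵥ* P), φ u)

/-- Type (II): `t^a u ↦ t^{aQ+ūP} z^{a·lᵀ+ū·hᵀ}` with `z ≠ 1` not a proper power, `l ≠ 0`. -/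
def IsTypeII (m n : ℕ) (Ψ : GG m n →* GG m n) : Prop :=
  ∃ (z : FreeGroup (Fin n)) (Q : Matrix (Fin m) (Fin m) ℤ) (P : Matrix (Fin n) (Fin m) ℤ)
    (l : Fin m → ℤ) (h : Fin n → ℤ),
    z ≠ 1 ∧ (∀ (w : FreeGroup (Fin n)) (k : ℕ), 2 ≤ k → w ^ k ≠ z) ∧ l ≠ 0 ∧
      ∀ (a : Fin m → ℤ) (u : FreeGroup (Fin n)),
        Ψ (Multiplicative.ofAdd a, u) =
          (Multiplicative.ofAdd (a ᵥ* Q + abv u ᵥ* P), z ^ (a ⬝ᵥ l + abv u ⬝ᵥ h))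

end Stmt11

open Subgroup

theorem FreeGroup.commute_of_of_iff {α : Type*} {a b : α} :
    Commute (FreeGroup.of a) (FreeGroup.of b) ↔ a = b := by
  classical
  refine ⟨fun h => ?_, fun h => h ▸ Commute.refl _⟩
  obtain ⟨hab, -⟩ : a = b ∧ b = a := by
    simpa [FreeGroup.toWord_mul] using congrArg FreeGroup.toWord h.eq
  exact hab

instance FreeGroup.isCyclic_of_subsingleton {α : Type*} [Subsingleton α] :
    IsCyclic (FreeGroup α) := by
  rcases isEmpty_or_nonempty α with _ | ⟨⟨a⟩⟩
  · infer_instance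
  · have : Unique α := uniqueOfSubsingleton a
    infer_instance

namespace IsFreeGroup

variable {G : Type*} [Group G] [IsFreeGroup G]

theorem isCyclic_of_subsingleton_generators [Subsingleton (Generators G)] : IsCyclic G :=
  isCyclic_of_surjective (toFreeGroup G).symm.toMonoidHom (toFreeGroup G).symm.surjective

theorem isCyclic_of_isMulCommutative [IsMulCommutative G] : IsCyclic G := by
  have : Subsingleton (Generators G) := ⟨fun a b => FreeGroup.commute_of_of_iff.1 <| by
    simpa using Commute.map (mul_comm' (mulEquiv G (.of a)) (mulEquiv G (.of b)) :
      Commute _ _) (mulEquiv G).symm⟩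
  exact isCyclic_of_subsingleton_generators

end IsFreeGroup

namespace FreeGroup

variable {α : Type*}

theorem exists_mem_zpowers_of_commute {x y : FreeGroup α} (h : Commute x y) :
    ∃ z, x ∈ zpowers z ∧ y ∈ zpowers z := by
  have : IsMulCommutative (closure {x, y}) := isMulCommutative_closure <| by
    simp only [Set.mem_insert_iff, Set.mem_singleton_iff]
    rintro _ (rfl | rfl) _ (rfl | rfl)
    exacts [rfl, h.eq, h.symm.eq, rfl]
  obtain ⟨z, hz⟩ := (Subgroup.isCyclic_iff_exists_zpowers_eq_top _).1
    (IsFreeGroup.isCyclic_of_isMulCommutative (G := closure {x, y}))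
  exact ⟨z, hz ▸ subset_closure (by simp), hz ▸ subset_closure (by simp)⟩

noncomputable def exponentSum (a : α) : FreeGroup α →* Multiplicative ℤ :=
  letI := Classical.decEq α
  FreeGroup.lift (Pi.mulSingle a (Multiplicative.ofAdd 1))

theorem exponentSum_of_self (a : α) : exponentSum a (of a) = Multiplicative.ofAdd 1 := by
  simp [exponentSum]

theorem exponentSum_of_of_ne {a b : α} (h : b ≠ a) : exponentSum a (of b) = 1 := by
  simp [exponentSum, h]

theorem mem_zpowers_of_of_commute {c : FreeGroup α} {a : α} (h : Commute c (of a)) :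
    c ∈ zpowers (of a) := by
  obtain ⟨z, hc, ha⟩ := exists_mem_zpowers_of_commute h
  obtain ⟨q, hq⟩ := mem_zpowers_iff.1 ha
  -- `of a = z ^ q` forces `q = ±1`, as `exponentSum a` sends `of a` to a generator of `ℤ`.
  have hunit : q * (exponentSum a z).toAdd = 1 := by
    simpa [exponentSum_of_self] using congrArg (fun g => (exponentSum a g).toAdd) hq
  have hq2 : q * q = 1 := by
    rcases Int.eq_one_or_neg_one_of_mul_eq_one hunit with rfl | rfl <;> rfl
  have hz : z = of a ^ q := by rw [← hq, ← _root_.zpow_mul, hq2, zpow_one]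
  exact zpowers_le.2 (hz ▸ zpow_mem_zpowers _ _) hc

theorem eq_one_of_commute_of_of {c : FreeGroup α} {a b : α} (hab : a ≠ b)
    (ha : Commute c (of a)) (hb : Commute c (of b)) : c = 1 := by
  obtain ⟨p, rfl⟩ := mem_zpowers_iff.1 (mem_zpowers_of_of_commute ha)
  obtain ⟨q, hq⟩ := mem_zpowers_iff.1 (mem_zpowers_of_of_commute hb)
  have hp : p = 0 := by
    simpa [exponentSum_of_self, exponentSum_of_of_ne hab.symm] using
      congrArg (fun g => (exponentSum a g).toAdd) hq.symm
  rw [hp, zpow_zero]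

end FreeGroup

theorem IsFreeGroup.isCyclic_of_mem_center {G : Type*} [Group G] [IsFreeGroup G] {w : G}
    (hw : w ≠ 1) (hc : w ∈ center G) : IsCyclic G := by
  have : Subsingleton (Generators G) := by
    by_contra hne
    obtain ⟨a, b, hab⟩ := not_subsingleton_iff_nontrivial.1 hne
    have hcomm (x : FreeGroup (Generators G)) : Commute (toFreeGroup G w) x := by
      have : Commute w ((toFreeGroup G).symm x) := (mem_center_iff.1 hc _).symm
      simpa using this.map (toFreeGroup G)
    exact hw ((toFreeGroup G).map_eq_one_iff.1
      (FreeGroup.eq_one_of_commute_of_of hab (hcomm _) (hcomm _)))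
  exact isCyclic_of_subsingleton_generators

theorem FreeGroup.isCyclic_centralizer {α : Type*} {w : FreeGroup α} (hw : w ≠ 1) :
    IsCyclic (centralizer {w}) := by
  refine IsFreeGroup.isCyclic_of_mem_center (w := ⟨w, mem_centralizer_singleton_iff.2 rfl⟩)
    (by simpa using hw) (mem_center_iff.2 fun x => Subtype.ext ?_)
  exact mem_centralizer_singleton_iff.1 x.2

theorem pow_ne_of_forall_commute_mem_zpowers {G : Type*} [Group G] [IsMulTorsionFree G] {z : G}
    (hz : z ≠ 1) (h : ∀ x, Commute x z → x ∈ zpowers z) (v : G) {k : ℕ} (hk : 2 ≤ k) :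
    v ^ k ≠ z := by
  rintro rfl
  obtain ⟨d, hd⟩ := mem_zpowers_iff.1 (h v ((Commute.refl v).pow_right k))
  have hdk : d * k = 1 := by
    refine injective_zpow_iff_not_isOfFinOrder.2 (not_isOfFinOrder_of_isMulTorsionFree hz) ?_
    simp only [_root_.zpow_mul, hd, zpow_natCast, zpow_one]
  have := Int.le_of_dvd one_pos ⟨d, by rw [← hdk, mul_comm]⟩
  omega

theorem FreeGroup.exists_root_of_ne_one {α : Type*} {w : FreeGroup α} (hw : w ≠ 1) :
    ∃ z : FreeGroup α, z ≠ 1 ∧ (∀ (v : FreeGroup α) (k : ℕ), 2 ≤ k → v ^ k ≠ z) ∧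
      ∀ x, Commute x w → x ∈ zpowers z := by
  obtain ⟨z, hz⟩ := (Subgroup.isCyclic_iff_exists_zpowers_eq_top _).1 (isCyclic_centralizer hw)
  have hmem (x : FreeGroup α) (hx : Commute x w) : x ∈ zpowers z :=
    hz ▸ mem_centralizer_singleton_iff.2 hx.eq
  obtain ⟨j, hj⟩ := mem_zpowers_iff.1 (hmem w (Commute.refl w))
  have hz1 : z ≠ 1 := by rintro rfl; simp [← hj] at hw
  refine ⟨z, hz1, fun v k hk => pow_ne_of_forall_commute_mem_zpowers hz1 (fun x hx => ?_) v hk,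
    hmem⟩
  exact hmem x (hj ▸ hx.zpow_right j)

theorem MonoidHom.exists_eq_zpow_of_forall_mem_zpowers {G H : Type*} [Group G] [Group H]
    [IsMulTorsionFree H] (s : G →* H) {z : H} (hz : z ≠ 1) (hs : ∀ g, s g ∈ zpowers z) :
    ∃ κ : G →* Multiplicative ℤ, ∀ g, s g = z ^ (κ g).toAdd := by
  have hinj : Function.Injective (zpowersHom H z) := fun p q hpq =>
    Multiplicative.toAdd.injective <|
      injective_zpow_iff_not_isOfFinOrder.2 (not_isOfFinOrder_of_isMulTorsionFree hz) hpq
  let e := MonoidHom.ofInjective hinj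
  refine ⟨e.symm.toMonoidHom.comp (s.codRestrict _ hs), fun g => ?_⟩
  have := congrArg Subtype.val (e.apply_symm_apply ⟨s g, hs g⟩)
  rw [MonoidHom.ofInjective_apply] at this
  exact this.symm

theorem MonoidHom.toAdd_map_ofAdd_eq_sum {ι M : Type*} [Fintype ι] [DecidableEq ι]
    [AddCommGroup M] (f : Multiplicative (ι → ℤ) →* Multiplicative M) (a : ι → ℤ) :
    (f (.ofAdd a)).toAdd = ∑ i, a i • (f (.ofAdd (Pi.single i 1))).toAdd := by
  have hsingle (i : ι) : Pi.single i (a i) = a i • (Pi.single i 1 : ι → ℤ) := by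
    rw [← Pi.single_smul, smul_eq_mul, mul_one]
  conv_lhs => rw [← Finset.univ_sum_single a]
  simp only [hsingle, ofAdd_sum, ofAdd_zsmul, map_prod, map_zpow, toAdd_prod, toAdd_zpow]

namespace Stmt11

section Factorization

variable {m n : ℕ} {M : Type*} [AddCommGroup M]

theorem toAdd_map_eq_sum_abv (ψ : FreeGroup (Fin n) →* Multiplicative M)
    (u : FreeGroup (Fin n)) :
    (ψ u).toAdd = ∑ j, abv u j • (ψ (.of j)).toAdd := by
  induction u using FreeGroup.induction_on with
  | C1 => simp [abv]
  | of j => simp [abv, Pi.single_apply]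
  | inv_of j ih => simp_all [abv]
  | mul x y hx hy => simp_all [abv, add_smul, Finset.sum_add_distrib]

theorem toAdd_map_eq_sum (χ : GG m n →* Multiplicative M) (a : Fin m → ℤ)
    (u : FreeGroup (Fin n)) :
    (χ (.ofAdd a, u)).toAdd = ∑ i, a i • (χ (.ofAdd (Pi.single i 1), 1)).toAdd +
      ∑ j, abv u j • (χ (1, .of j)).toAdd := by
  have hsplit : ((.ofAdd a, u) : GG m n) = (.ofAdd a, 1) * (1, u) := by simp
  rw [hsplit, map_mul, toAdd_mul]
  exact congrArg₂ (· + ·) ((χ.comp (.inl _ _)).toAdd_map_ofAdd_eq_sum a)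
    (toAdd_map_eq_sum_abv (χ.comp (.inr _ _)) u)

theorem exists_matrix_eq (χ : GG m n →* Multiplicative (Fin m → ℤ)) :
    ∃ (Q : Matrix (Fin m) (Fin m) ℤ) (P : Matrix (Fin n) (Fin m) ℤ), ∀ a u,
      χ (.ofAdd a, u) = .ofAdd (a ᵥ* Q + abv u ᵥ* P) :=
  ⟨.of fun i => (χ (.ofAdd (Pi.single i 1), 1)).toAdd, .of fun j => (χ (1, .of j)).toAdd,
    fun a u => Multiplicative.toAdd.injective <| by
      rw [toAdd_map_eq_sum, toAdd_ofAdd, vecMul_eq_sum, vecMul_eq_sum]; rfl⟩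

theorem exists_vector_eq (χ : GG m n →* Multiplicative ℤ) :
    ∃ (l : Fin m → ℤ) (h : Fin n → ℤ), ∀ a u,
      χ (.ofAdd a, u) = .ofAdd (a ⬝ᵥ l + abv u ⬝ᵥ h) :=
  ⟨fun i => (χ (.ofAdd (Pi.single i 1), 1)).toAdd, fun j => (χ (1, .of j)).toAdd,
    fun a u => Multiplicative.toAdd.injective <| by
      rw [toAdd_map_eq_sum, toAdd_ofAdd]; simp only [dotProduct, smul_eq_mul]⟩

end Factorization

section Types

variable {m n : ℕ} {Ψ : GG m n →* GG m n}

theorem IsTypeI.snd_map_ofAdd (hΨ : IsTypeI m n Ψ) (a : Fin m → ℤ) :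
    (Ψ (.ofAdd a, 1)).2 = 1 := by
  obtain ⟨φ, Q, P, hΨ⟩ := hΨ
  rw [hΨ, map_one]

theorem IsTypeII.exists_snd_map_ofAdd_ne_one (hΨ : IsTypeII m n Ψ) :
    ∃ a, (Ψ (.ofAdd a, 1)).2 ≠ 1 := by
  obtain ⟨z, Q, P, l, h, hz, -, hl, hΨ⟩ := hΨ
  obtain ⟨i, hi⟩ := Function.ne_iff.1 hl
  refine ⟨Pi.single i 1, ?_⟩
  simpa [hΨ, abv, hz] using hi

theorem isTypeI_of_forall_snd_map_ofAdd_eq_one (h : ∀ a, (Ψ (.ofAdd a, 1)).2 = 1) :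
    IsTypeI m n Ψ := by
  obtain ⟨Q, P, hQP⟩ := exists_matrix_eq ((MonoidHom.fst _ _).comp Ψ)
  refine ⟨(MonoidHom.snd _ _).comp (Ψ.comp (.inr _ _)), Q, P, fun a u => Prod.ext (hQP a u) ?_⟩
  have hsplit : ((.ofAdd a, u) : GG m n) = (.ofAdd a, 1) * (1, u) := by simp
  rw [hsplit, map_mul, Prod.snd_mul, h a, one_mul]
  rfl

theorem isTypeII_of_snd_map_ofAdd_ne_one {a₀ : Fin m → ℤ} (h : (Ψ (.ofAdd a₀, 1)).2 ≠ 1) :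
    IsTypeII m n Ψ := by
  let s := (MonoidHom.snd _ _).comp Ψ
  obtain ⟨z, hz, hroot, hcent⟩ := FreeGroup.exists_root_of_ne_one h
  have hcomm (g : GG m n) : Commute (s g) (s (.ofAdd a₀, 1)) :=
    Commute.map (Prod.ext (mul_comm _ _) (by simp) : Commute g (.ofAdd a₀, 1)) s
  obtain ⟨κ, hκ⟩ := s.exists_eq_zpow_of_forall_mem_zpowers hz fun g => hcent _ (hcomm g)
  obtain ⟨Q, P, hQP⟩ := exists_matrix_eq ((MonoidHom.fst _ _).comp Ψ)
  obtain ⟨l, v, hlv⟩ := exists_vector_eq κ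
  refine ⟨z, Q, P, l, v, hz, hroot, ?_, fun a u => Prod.ext (hQP a u) ?_⟩
  · rintro rfl
    exact h ((hκ _).trans (by simp [hlv, abv]))
  · exact (hκ _).trans (by rw [hlv]; rfl)

end Types

theorem stmt11_general (m n : ℕ) (Ψ : GG m n →* GG m n) :
    Xor' (IsTypeI m n Ψ) (IsTypeII m n Ψ) := by
  by_cases h : ∀ a, (Ψ (.ofAdd a, 1)).2 = 1
  · refine Or.inl ⟨isTypeI_of_forall_snd_map_ofAdd_eq_one h, fun hII => ?_⟩
    obtain ⟨a, ha⟩ := hII.exists_snd_map_ofAdd_ne_one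
    exact ha (h a)
  · obtain ⟨a₀, ha₀⟩ := not_forall.1 h
    exact Or.inr ⟨isTypeII_of_snd_map_ofAdd_ne_one ha₀, fun hI => ha₀ (hI.snd_map_ofAdd a₀)⟩

/-- for `n ≠ 1`, every endomorphism of `ℤ^m × F_n` is of exactly one of
the two types. -/
theorem stmt11 (m n : ℕ) (hn : n ≠ 1) (Ψ : GG m n →* GG m n) :
    Xor' (IsTypeI m n Ψ) (IsTypeII m n Ψ) :=
  stmt11_general m n Ψ

end Stmt11
end

section
/- Let n ≥ 2 and let Ψ = Ψ_{φ,Q,P} be a type (I) endomorphism of ℤ^m × F_n given by (a, u) ↦ (aQ + ūP, φ(u)). Then Ψ is surjective if and only if φ is surjective and det(Q) = ±1. -/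
/-! Abelianizing the free factor turns `Ψ` into the integer matrix `[[Q, 0], [P, M]]`, where `M`
is the abelianization of `φ`. If `Ψ` is surjective, so are `φ` and this square matrix, which is
then invertible; its determinant is `det Q * det M`, so `det Q` is a unit of `ℤ`. Conversely, for
invertible `Q` a preimage of `(b, φ u)` is `((b - ū P) Q⁻¹, u)`. -/

open Matrix

namespace Stmt14

def abv {n : ℕ} (u : FreeGroup (Fin n)) : Fin n → ℤ :=
  Multiplicative.toAdd ((FreeGroup.lift fun i => Multiplicative.ofAdd (Pi.single i 1)) u)

abbrev GG (m n : ℕ) := Multiplicative (Fin m → ℤ) × FreeGroup (Fin n)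

lemma abv_of {n : ℕ} (i : Fin n) : abv (FreeGroup.of i) = Pi.single i 1 := by
  simp [abv]

lemma abv_surjective {n : ℕ} : Function.Surjective (abv (n := n)) := by
  intro x
  refine ⟨((List.finRange n).map fun i => FreeGroup.of i ^ x i).prod, ?_⟩
  have abv_zpow_of (i : Fin n) :
      Multiplicative.toAdd ((FreeGroup.lift fun i => Multiplicative.ofAdd (Pi.single i (1 : ℤ)))
        (FreeGroup.of i ^ x i)) = Pi.single i (x i) := by
    rw [map_zpow, toAdd_zpow, ← abv, abv_of, ← Pi.single_smul, smul_eq_mul, mul_one]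
  rw [abv, map_list_prod, toAdd_list_sum, List.map_map, List.map_map]
  simp only [Function.comp_def, abv_zpow_of]
  rw [← Fin.sum_univ_def, Finset.univ_sum_single]

lemma toAdd_lift_eq_abv_vecMul {n k : ℕ} (c : Fin n → Fin k → ℤ) (u : FreeGroup (Fin n)) :
    Multiplicative.toAdd ((FreeGroup.lift fun i => Multiplicative.ofAdd (c i)) u) =
      abv u ᵥ* Matrix.of c := by
  have lift_eq : (FreeGroup.lift fun i => Multiplicative.ofAdd (c i)) =
      (AddMonoidHom.toMultiplicative (Matrix.of c).vecMulLinear.toAddMonoidHom).comp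
        (FreeGroup.lift fun i => Multiplicative.ofAdd (Pi.single i 1)) := by
    apply FreeGroup.ext_hom
    intro i
    simp
  rw [lift_eq]
  rfl

def abvMatrix {n k : ℕ} (φ : FreeGroup (Fin n) →* FreeGroup (Fin k)) : Matrix (Fin n) (Fin k) ℤ :=
  Matrix.of fun i => abv (φ (FreeGroup.of i))

lemma abv_map {n k : ℕ} (φ : FreeGroup (Fin n) →* FreeGroup (Fin k)) (u : FreeGroup (Fin n)) :
    abv (φ u) = abv u ᵥ* abvMatrix φ := by
  rw [abvMatrix, ← toAdd_lift_eq_abv_vecMul]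
  have lift_comp : (FreeGroup.lift fun i => Multiplicative.ofAdd (Pi.single i 1)).comp φ =
      FreeGroup.lift fun i => Multiplicative.ofAdd (abv (φ (FreeGroup.of i))) := by
    apply FreeGroup.ext_hom
    intro i
    simp [abv]
  rw [← lift_comp]
  rfl

section TypeI

variable {m n : ℕ} (φ : FreeGroup (Fin n) →* FreeGroup (Fin n))
  (Q : Matrix (Fin m) (Fin m) ℤ) (P : Matrix (Fin n) (Fin m) ℤ)

def typeI (p : (Fin m → ℤ) × FreeGroup (Fin n)) : (Fin m → ℤ) × FreeGroup (Fin n) :=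
  (p.1 ᵥ* Q + abv p.2 ᵥ* P, φ p.2)

variable {φ Q P}

lemma surjective_of_typeI_surjective (h : Function.Surjective (typeI φ Q P)) :
    Function.Surjective φ := fun v =>
  let ⟨p, hp⟩ := h (0, v)
  ⟨p.2, congrArg Prod.snd hp⟩

lemma vecMul_fromBlocks_surjective_of_typeI_surjective (h : Function.Surjective (typeI φ Q P)) :
    Function.Surjective (fromBlocks Q 0 P (abvMatrix φ)).vecMul := by
  intro y
  obtain ⟨v, hv⟩ := abv_surjective (fun j => y (Sum.inr j))
  obtain ⟨⟨a, u⟩, hau⟩ := h (fun i => y (Sum.inl i), v)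
  simp only [typeI, Prod.mk.injEq] at hau
  obtain ⟨hfst, hsnd⟩ := hau
  refine ⟨Sum.elim a (abv u), ?_⟩
  change Sum.elim a (abv u) ᵥ* _ = y
  rw [vecMul_fromBlocks, Sum.elim_comp_inl, Sum.elim_comp_inr, ← abv_map, hsnd, hv, vecMul_zero,
    zero_add, hfst]
  ext (i | j) <;> rfl

lemma isUnit_det_of_typeI_surjective (h : Function.Surjective (typeI φ Q P)) :
    IsUnit Q.det := by
  have hB := vecMul_surjective_iff_isUnit.mp (vecMul_fromBlocks_surjective_of_typeI_surjective h)
  rw [isUnit_iff_isUnit_det, det_fromBlocks_zero₁₂] at hB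
  exact isUnit_of_mul_isUnit_left hB

lemma typeI_surjective_of_isUnit_det (hφ : Function.Surjective φ) (hQ : IsUnit Q.det) :
    Function.Surjective (typeI φ Q P) := by
  rintro ⟨b, v⟩
  obtain ⟨u, rfl⟩ := hφ v
  refine ⟨((b - abv u ᵥ* P) ᵥ* Q⁻¹, u), ?_⟩
  rw [typeI, vecMul_vecMul, nonsing_inv_mul _ hQ, vecMul_one, sub_add_cancel]

theorem typeI_surjective_iff :
    Function.Surjective (typeI φ Q P) ↔ Function.Surjective φ ∧ IsUnit Q.det :=
  ⟨fun h => ⟨surjective_of_typeI_surjective h, isUnit_det_of_typeI_surjective h⟩,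
    fun h => typeI_surjective_of_isUnit_det h.1 h.2⟩

end TypeI

theorem stmt14_general (m n : ℕ) (φ : FreeGroup (Fin n) →* FreeGroup (Fin n))
    (Q : Matrix (Fin m) (Fin m) ℤ) (P : Matrix (Fin n) (Fin m) ℤ)
    (Ψ : GG m n →* GG m n)
    (hΨ : ∀ (a : Fin m → ℤ) (u : FreeGroup (Fin n)),
      Ψ (Multiplicative.ofAdd a, u) =
        (Multiplicative.ofAdd (a ᵥ* Q + abv u ᵥ* P), φ u)) :
    Function.Surjective Ψ ↔ Function.Surjective φ ∧ (Q.det = 1 ∨ Q.det = -1) := by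
  let e : (Fin m → ℤ) × FreeGroup (Fin n) ≃ GG m n :=
    Multiplicative.ofAdd.prodCongr (Equiv.refl _)
  have hΨ_eq : ⇑Ψ = e ∘ typeI φ Q P ∘ e.symm := funext fun p => hΨ p.1.toAdd p.2
  rw [hΨ_eq, EquivLike.comp_surjective, EquivLike.surjective_comp, typeI_surjective_iff,
    Int.isUnit_iff]

/-- for `n ≥ 2`, a type (I) endomorphism `Ψ_{φ,Q,P}` of `ℤ^m × F_n` is
surjective iff `φ` is surjective and `det Q = ±1`. -/
theorem stmt14 (m n : ℕ) (hn : 2 ≤ n) (φ : FreeGroup (Fin n) →* FreeGroup (Fin n))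
    (Q : Matrix (Fin m) (Fin m) ℤ) (P : Matrix (Fin n) (Fin m) ℤ)
    (Ψ : GG m n →* GG m n)
    (hΨ : ∀ (a : Fin m → ℤ) (u : FreeGroup (Fin n)),
      Ψ (Multiplicative.ofAdd a, u) =
        (Multiplicative.ofAdd (a ᵥ* Q + abv u ᵥ* P), φ u)) :
    Function.Surjective Ψ ↔ Function.Surjective φ ∧ (Q.det = 1 ∨ Q.det = -1) :=
  stmt14_general m n φ Q P Ψ hΨ

end Stmt14
end

section
/- Let n ≠ 1 and let Ψ = Ψ_{z,l,h,Q,P} be a type (II) endomorphism of ℤ^m × F_n, given by (a, u) ↦ (aQ + ūP, z^{a·lᵀ + ū·hᵀ}), where 1 ≠ z ∈ F_n is not a proper power, l ≠ 0. Then the fixed subgroup Fix(Ψ) is finitely generated; indeed Fix(Ψ) = { t^a z^r : a·lᵀ + r(z̄·hᵀ) = r and a(I_m − Q) = r z̄ P }, an abelian group embedding in ℤ^{m+1}. -/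
open Matrix

namespace Stmt18

def abv {n : ℕ} (u : FreeGroup (Fin n)) : Fin n → ℤ :=
  Multiplicative.toAdd ((FreeGroup.lift fun i => Multiplicative.ofAdd (Pi.single i 1)) u)

abbrev GG (m n : ℕ) := Multiplicative (Fin m → ℤ) × FreeGroup (Fin n)

/-!
A type (II) endomorphism sends everything into `ℤ^m × ⟨z⟩`, so a fixed point has the form
`(a, z^r)`, where `r` may be taken to be the exponent `a·lᵀ + ū·hᵀ` of its image; reading off the
two coordinates of `Ψ(a, z^r) = (a, z^r)` gives the two linear conditions. The same exponent makes
`g ↦ (a·lᵀ + ū·hᵀ, a)` a homomorphism `ℤ^m × F_n → ℤ^{m+1}` which is injective on `Fix(Ψ)`, because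
a fixed point is determined by its first coordinate and that exponent. Hence `Fix(Ψ)` is abelian
and, as a subgroup of a finitely generated abelian group, finitely generated.
-/

theorem Subgroup.fg_of_injective_multiplicative {G A : Type*} [Group G] [AddCommGroup A]
    [IsNoetherian ℤ A] {S : Subgroup G} (f : S →* Multiplicative A) (hf : Function.Injective f) :
    S.FG := by
  have : IsNoetherian ℤ (Additive (Multiplicative A)) := inferInstanceAs (IsNoetherian ℤ A)
  have hrange : f.range.FG := by
    rw [Subgroup.fg_iff_add_fg, ← AddSubgroup.toIntSubmodule_toAddSubgroup f.range.toAddSubgroup,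
      ← Submodule.fg_iff_addSubgroup_fg]
    exact IsNoetherian.noetherian _
  have : Group.FG f.range := (Group.fg_iff_subgroup_fg _).2 hrange
  exact (Group.fg_iff_subgroup_fg S).1
    (Group.fg_of_surjective (f := (MonoidHom.ofInjective hf).symm.toMonoidHom)
      (MonoidHom.ofInjective hf).symm.surjective)

theorem Subgroup.mul_comm_of_injective {G H : Type*} [Group G] [CommGroup H] {S : Subgroup G}
    (f : S →* H) (hf : Function.Injective f) {x y : G} (hx : x ∈ S) (hy : y ∈ S) :
    x * y = y * x :=
  congrArg Subtype.val <| hf <| show f (⟨x, hx⟩ * ⟨y, hy⟩) = f (⟨y, hy⟩ * ⟨x, hx⟩) by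
    rw [map_mul, map_mul, mul_comm]

theorem vecMul_one_sub_eq_iff {ι R : Type*} [Fintype ι] [DecidableEq ι] [Ring R]
    (a b : ι → R) (Q : Matrix ι ι R) : a ᵥ* (1 - Q) = b ↔ a ᵥ* Q + b = a := by
  rw [vecMul_sub, vecMul_one, sub_eq_iff_eq_add', eq_comm]

theorem abv_mul {n : ℕ} (u v : FreeGroup (Fin n)) : abv (u * v) = abv u + abv v := by
  simp [abv]

theorem abv_zpow {n : ℕ} (u : FreeGroup (Fin n)) (r : ℤ) : abv (u ^ r) = r • abv u := by
  simp [abv]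

section TypeTwo

variable {m n : ℕ} {z : FreeGroup (Fin n)} {Q : Matrix (Fin m) (Fin m) ℤ}
  {P : Matrix (Fin n) (Fin m) ℤ} {l : Fin m → ℤ} {h : Fin n → ℤ} {Ψ : GG m n →* GG m n}

def exponent (l : Fin m → ℤ) (h : Fin n → ℤ) : GG m n →* Multiplicative ℤ where
  toFun g := Multiplicative.ofAdd (g.1.toAdd ⬝ᵥ l + abv g.2 ⬝ᵥ h)
  map_one' := by simp [abv]
  map_mul' x y := by
    simp only [Prod.fst_mul, Prod.snd_mul, toAdd_mul, abv_mul, add_dotProduct, ← ofAdd_add]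
    congr 1
    ring

def fixEmbedding (l : Fin m → ℤ) (h : Fin n → ℤ) : GG m n →* Multiplicative (Fin (m + 1) → ℤ) where
  toFun g := Multiplicative.ofAdd (Fin.cons (exponent l h g).toAdd g.1.toAdd)
  map_one' := by
    rw [map_one]
    exact congrArg Multiplicative.ofAdd (cons_zero_zero (α := ℤ) (n := m))
  map_mul' x y := by
    rw [map_mul]
    exact congrArg Multiplicative.ofAdd
      (cons_add_cons (exponent l h x).toAdd x.1.toAdd (exponent l h y).toAdd y.1.toAdd).symm

variable (hΨ : ∀ (a : Fin m → ℤ) (u : FreeGroup (Fin n)),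
  Ψ (Multiplicative.ofAdd a, u) =
    (Multiplicative.ofAdd (a ᵥ* Q + abv u ᵥ* P), z ^ (a ⬝ᵥ l + abv u ⬝ᵥ h)))
include hΨ

theorem snd_apply_eq_zpow_exponent (g : GG m n) : (Ψ g).2 = z ^ (exponent l h g).toAdd :=
  congrArg Prod.snd (hΨ g.1.toAdd g.2)

theorem apply_ofAdd_zpow (a : Fin m → ℤ) (r : ℤ) :
    Ψ (Multiplicative.ofAdd a, z ^ r) =
      (Multiplicative.ofAdd (a ᵥ* Q + r • (abv z ᵥ* P)), z ^ (a ⬝ᵥ l + r * (abv z ⬝ᵥ h))) := by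
  rw [hΨ, abv_zpow, smul_vecMul, smul_dotProduct, smul_eq_mul]

theorem apply_eq_self_iff (g : GG m n) :
    Ψ g = g ↔ ∃ (a : Fin m → ℤ) (r : ℤ),
      g = (Multiplicative.ofAdd a, z ^ r) ∧
      a ⬝ᵥ l + r * (abv z ⬝ᵥ h) = r ∧
      a ᵥ* (1 - Q) = r • (abv z ᵥ* P) := by
  constructor
  · intro hfix
    obtain ⟨a, u⟩ := g
    set r := (exponent l h (a, u)).toAdd
    have hu : u = z ^ r := (congrArg Prod.snd hfix).symm.trans (snd_apply_eq_zpow_exponent hΨ _)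
    have hcoords := hfix
    rw [show ((a, u) : GG m n) = (Multiplicative.ofAdd a.toAdd, z ^ r) by rw [← hu]; rfl,
      apply_ofAdd_zpow hΨ, Prod.mk.injEq] at hcoords
    refine ⟨a.toAdd, r, by rw [← hu]; rfl, ?_, ?_⟩
    · calc a.toAdd ⬝ᵥ l + r * (abv z ⬝ᵥ h) = a.toAdd ⬝ᵥ l + abv (z ^ r) ⬝ᵥ h := by
            rw [abv_zpow, smul_dotProduct, smul_eq_mul]
        _ = r := by rw [← hu]; rfl
    · exact (vecMul_one_sub_eq_iff _ _ _).2 (congrArg Multiplicative.toAdd hcoords.1)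
  · rintro ⟨a, r, rfl, hr, ha⟩
    rw [apply_ofAdd_zpow hΨ, hr, (vecMul_one_sub_eq_iff _ _ _).1 ha]

theorem eq_of_fixEmbedding_eq {x y : GG m n} (hx : Ψ x = x) (hy : Ψ y = y)
    (hxy : fixEmbedding l h x = fixEmbedding l h y) : x = y := by
  have hcons := congrArg Multiplicative.toAdd hxy
  simp only [fixEmbedding, MonoidHom.coe_mk, OneHom.coe_mk, toAdd_ofAdd, Fin.cons_inj] at hcons
  obtain ⟨hexp, hfst⟩ := hcons
  refine Prod.ext (Multiplicative.toAdd.injective hfst) ?_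
  rw [← hx, ← hy, snd_apply_eq_zpow_exponent hΨ, snd_apply_eq_zpow_exponent hΨ, hexp]

end TypeTwo

theorem stmt18_general (m n : ℕ) (z : FreeGroup (Fin n))
    (Q : Matrix (Fin m) (Fin m) ℤ) (P : Matrix (Fin n) (Fin m) ℤ)
    (l : Fin m → ℤ) (h : Fin n → ℤ)
    (Ψ : GG m n →* GG m n)
    (hΨ : ∀ (a : Fin m → ℤ) (u : FreeGroup (Fin n)),
      Ψ (Multiplicative.ofAdd a, u) =
        (Multiplicative.ofAdd (a ᵥ* Q + abv u ᵥ* P), z ^ (a ⬝ᵥ l + abv u ⬝ᵥ h))) :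
    ∃ S : Subgroup (GG m n),
      (∀ g, g ∈ S ↔ Ψ g = g) ∧
      S.FG ∧
      (∀ g, g ∈ S ↔ ∃ (a : Fin m → ℤ) (r : ℤ),
        g = (Multiplicative.ofAdd a, z ^ r) ∧
        a ⬝ᵥ l + r * (abv z ⬝ᵥ h) = r ∧
        a ᵥ* (1 - Q) = r • (abv z ᵥ* P)) ∧
      (∀ x y : GG m n, x ∈ S → y ∈ S → x * y = y * x) ∧
      ∃ f : S →* Multiplicative (Fin (m + 1) → ℤ), Function.Injective f := by
  set S := Ψ.eqLocus (MonoidHom.id _)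
  set f := (fixEmbedding l h).comp S.subtype
  have hf : Function.Injective f := fun x y hxy =>
    Subtype.ext (eq_of_fixEmbedding_eq hΨ x.2 y.2 hxy)
  exact ⟨S, fun _ => Iff.rfl, Subgroup.fg_of_injective_multiplicative f hf,
    apply_eq_self_iff hΨ, fun _ _ => Subgroup.mul_comm_of_injective f hf, f, hf⟩

/-- for `n ≠ 1` and a type (II) endomorphism
`Ψ(a,u) = (aQ + ūP, z^{a·lᵀ + ū·hᵀ})` (`z ≠ 1` not a proper power, `l ≠ 0`), the fixed
subgroup is finitely generated; it equals
`{ t^a z^r : a·lᵀ + r(z̄·hᵀ) = r, a(I_m − Q) = r z̄ P }`, an abelian group embedding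
into `ℤ^{m+1}`. -/
theorem stmt18 (m n : ℕ) (hn : n ≠ 1) (z : FreeGroup (Fin n))
    (Q : Matrix (Fin m) (Fin m) ℤ) (P : Matrix (Fin n) (Fin m) ℤ)
    (l : Fin m → ℤ) (h : Fin n → ℤ)
    (hz : z ≠ 1) (hzp : ∀ (w : FreeGroup (Fin n)) (k : ℕ), 2 ≤ k → w ^ k ≠ z)
    (hl : l ≠ 0)
    (Ψ : GG m n →* GG m n)
    (hΨ : ∀ (a : Fin m → ℤ) (u : FreeGroup (Fin n)),
      Ψ (Multiplicative.ofAdd a, u) =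
        (Multiplicative.ofAdd (a ᵥ* Q + abv u ᵥ* P), z ^ (a ⬝ᵥ l + abv u ⬝ᵥ h))) :
    ∃ S : Subgroup (GG m n),
      (∀ g, g ∈ S ↔ Ψ g = g) ∧
      S.FG ∧
      (∀ g, g ∈ S ↔ ∃ (a : Fin m → ℤ) (r : ℤ),
        g = (Multiplicative.ofAdd a, z ^ r) ∧
        a ⬝ᵥ l + r * (abv z ⬝ᵥ h) = r ∧
        a ᵥ* (1 - Q) = r • (abv z ᵥ* P)) ∧
      (∀ x y : GG m n, x ∈ S → y ∈ S → x * y = y * x) ∧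
      ∃ f : S →* Multiplicative (Fin (m + 1) → ℤ), Function.Injective f :=
  stmt18_general m n z Q P l h Ψ hΨ

end Stmt18
end
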